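/- arXiv:1705.07802 — 2 statements merged into one kernel-verified Lean document; each statement's English description precedes it below -/
import Mathlib

section
/- There exists a conciliatory function U: ω̂^ω → ω̂^ω that is simultaneously Σ⁰₂-universal and initializable. -/
/-!
Common definitions for formalizing "On the structure of the Wadge degrees of bqo-valued
Borel functions" by Kihara and Montalbán.
-/

open scoped Classical
noncomputable section

namespace WadgeStudy

/-! ### Baire space `ω^ω` -/

/-- Baire space `ω^ω`: the product of countably many copies of discrete `ω`. -/
abbrev Baire : Type := ℕ → ℕ

/-- The basic clopen set `[σ]` of all infinite sequences extending the finite string `σ`. -/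
def cylB (σ : List ℕ) : Set Baire := {X | ∀ i : Fin σ.length, X i = σ.get i}

/-- The finite initial segment `X↾n` of `X ∈ ω^ω`. -/
def initSeg (X : Baire) (n : ℕ) : List ℕ := List.ofFn fun i : Fin n => X i

/-- Concatenation `σ⌢X` of a finite string and an infinite sequence. -/
def appendStr (σ : List ℕ) (X : Baire) : Baire := fun i =>
  if h : i < σ.length then σ.get ⟨i, h⟩ else X (i - σ.length)

/-! ### The Borel hierarchy -/

/-- The Borel hierarchy: `Σ⁰₁` sets are the open sets; for `α > 1`, a set is `Σ⁰_α` if it is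
a countable union of sets each of which is `Π⁰_β` (i.e. has `Σ⁰_β` complement) for some
`β < α`. -/
inductive SigmaZero (X : Type*) [TopologicalSpace X] : Ordinal.{0} → Set X → Prop
  | of_isOpen {s : Set X} : IsOpen s → SigmaZero X 1 s
  | iUnion {α : Ordinal} (hα : 1 < α) (f : ℕ → Set X) (β : ℕ → Ordinal)
      (hβ : ∀ n, β n < α) (hf : ∀ n, SigmaZero X (β n) (f n)ᶜ) :
      SigmaZero X α (⋃ n, f n)

/-- `Π⁰_α` sets are the complements of `Σ⁰_α` sets. -/
def PiZero (X : Type*) [TopologicalSpace X] (α : Ordinal.{0}) (s : Set X) : Prop :=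
  SigmaZero X α sᶜ

/-- `Δ⁰_α = Σ⁰_α ∩ Π⁰_α`. -/
def DeltaZero (X : Type*) [TopologicalSpace X] (α : Ordinal.{0}) (s : Set X) : Prop :=
  SigmaZero X α s ∧ PiZero X α s

/-- A countable ordinal. -/
def IsCountableOrd (ξ : Ordinal.{0}) : Prop := ξ.card ≤ Cardinal.aleph0

/-- `A : X → Q` (with `Q` carrying the discrete topology) is `Δ⁰_ξ`-measurable iff its range is
countable and every fiber is `Δ⁰_ξ`. -/
def DeltaMeasurable {X : Type*} [TopologicalSpace X] {Q : Type*} (ξ : Ordinal.{0}) (A : X → Q) :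
    Prop :=
  (Set.range A).Countable ∧ ∀ q : Q, DeltaZero X ξ (A ⁻¹' {q})

/-- A function into Baire space is `Σ⁰_ξ`-measurable if the preimage of every basic clopen set
is `Σ⁰_ξ`. -/
def SigmaMeasurable {X : Type*} [TopologicalSpace X] (ξ : Ordinal.{0}) (D : X → Baire) : Prop :=
  ∀ σ : List ℕ, SigmaZero X ξ (D ⁻¹' cylB σ)

/-- A `Q`-valued function is Borel if it is `Δ⁰_ξ`-measurable for some countable ordinal `ξ`. -/
def BorelMeasurable {X : Type*} [TopologicalSpace X] {Q : Type*} (A : X → Q) : Prop :=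
  ∃ ξ : Ordinal.{0}, IsCountableOrd ξ ∧ DeltaMeasurable ξ A

/-! ### Wadge reducibility of `Q`-valued functions -/

/-- `Q`-Wadge reducibility: `A ≤_w B` iff there is a continuous `θ` from the domain of `A` to
the domain of `B` with `A X ≤_Q B (θ X)` for all `X`. -/
def WadgeLE {X Y : Type*} [TopologicalSpace X] [TopologicalSpace Y] {Q : Type*} [Preorder Q]
    (A : X → Q) (B : Y → Q) : Prop :=
  ∃ θ : X → Y, Continuous θ ∧ ∀ x, A x ≤ B (θ x)

/-- `Q`-Wadge equivalence. -/
def WadgeEquiv {X Y : Type*} [TopologicalSpace X] [TopologicalSpace Y] {Q : Type*} [Preorder Q]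
    (A : X → Q) (B : Y → Q) : Prop :=
  WadgeLE A B ∧ WadgeLE B A

/-- `A` is self-dual if there is a continuous `θ` with `A (θ X) ≰_Q A X` for all `X`. -/
def SelfDual {Q : Type*} [Preorder Q] (A : Baire → Q) : Prop :=
  ∃ θ : Baire → Baire, Continuous θ ∧ ∀ X, ¬ A (θ X) ≤ A X

/-- The function `A↾[σ] : X ↦ A (σ⌢X)`. -/
def restrictCyl {Q : Type*} (A : Baire → Q) (σ : List ℕ) : Baire → Q :=
  fun X => A (appendStr σ X)

/-- `A` is initializable if `A ≤_w A↾[σ]` for every finite string `σ`. -/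
def Initializable {Q : Type*} [Preorder Q] (A : Baire → Q) : Prop :=
  ∀ σ : List ℕ, WadgeLE A (restrictCyl A σ)

/-- `F(A) = {X : ∀ n, A↾[X↾n] ≡_w A}`. -/
def FSet {Q : Type*} [Preorder Q] (A : Baire → Q) : Set Baire :=
  {X | ∀ n : ℕ, WadgeEquiv (restrictCyl A (initSeg X n)) A}

/-- The countable join `⊕_n A_n`, defined by `(⊕_n A_n)(n⌢X) = A_n X`. -/
def oplus {Q : Type*} (A : ℕ → Baire → Q) : Baire → Q :=
  fun X => A (X 0) fun n => X (n + 1)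

/-- A Borel function `A` is σ-join-reducible if its `Q`-Wadge degree is the least upper bound
of a countable collection of `Q`-Wadge degrees (of Borel functions) each strictly below it. -/
def SigmaJoinReducible {Q : Type*} [Preorder Q] (A : Baire → Q) : Prop :=
  ∃ B : ℕ → Baire → Q,
    (∀ n, BorelMeasurable (B n)) ∧
    (∀ n, WadgeLE (B n) A ∧ ¬ WadgeLE A (B n)) ∧
    ∀ C : Baire → Q, BorelMeasurable C → (∀ n, WadgeLE (B n) C) → WadgeLE A C

/-! ### Better quasi-orders -/

/-- Removing the first entry of a strictly increasing sequence. -/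
def dropMin (X : {X : Baire // StrictMono X}) : {X : Baire // StrictMono X} :=
  ⟨fun n => X.1 (n + 1), fun _ _ h => X.2 (Nat.add_lt_add_right h 1)⟩

/-- A quasi-order `Q` is a better-quasi-order if for every continuous `f : [ω]^ω → Q` (where
`Q` is discrete and `[ω]^ω ⊆ ω^ω` is the subspace of strictly increasing sequences) there is
`X` with `f X ≤_Q f X⁻`. -/
def IsBQO (Q : Type*) [Preorder Q] : Prop :=
  ∀ f : {X : Baire // StrictMono X} → Q,
    @Continuous _ _ _ ⊥ f → ∃ X, f X ≤ f (dropMin X)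

/-! ### Terms: nested labeled trees and forests -/

/-- `L(Q)`-terms: constants `q ∈ Q`, labelings `⟨T⟩^{ω^α}` (with `⟨T⟩ = ⟨T⟩^{ω^0}`),
trees `B → ⊔_i F_i`, and countable disjoint unions `⊔_i F_i`. -/
inductive Term (Q : Type u) : Type (max u 1)
  | const : Q → Term Q
  | jump : Ordinal.{0} → Term Q → Term Q
  | node : Term Q → (ℕ → Term Q) → Term Q
  | sup : (ℕ → Term Q) → Term Q

/-- `⟨⟩`-type (base) terms: constants and labelings. -/
def IsBase {Q : Type u} : Term Q → Prop
  | Term.const _ => True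
  | Term.jump _ _ => True
  | _ => False

/-- A rank function on terms, used to define the quasi-order `⊴` by recursion. -/
def rk {Q : Type u} : Term Q → Ordinal.{0}
  | .const _ => 0
  | .jump _ T => rk T + 1
  | .node B F => max (rk B) (Ordinal.lsub fun i => rk (F i)) + 1
  | .sup F => Ordinal.lsub (fun i => rk (F i)) + 1

theorem ord_lt_add_one (a : Ordinal.{0}) : a < a + 1 := by
  rw [Ordinal.add_one_eq_succ]; exact Order.lt_succ a

theorem rk_lt_jump {Q : Type u} (α : Ordinal.{0}) (T : Term Q) : rk T < rk (.jump α T) :=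
  ord_lt_add_one (rk T)

theorem rk_base_lt_node {Q : Type u} (B : Term Q) (F : ℕ → Term Q) :
    rk B < rk (.node B F) :=
  lt_of_le_of_lt (le_max_left _ _) (ord_lt_add_one _)

theorem rk_child_lt_node {Q : Type u} (B : Term Q) (F : ℕ → Term Q) (i : ℕ) :
    rk (F i) < rk (.node B F) :=
  lt_of_lt_of_le (Ordinal.lt_lsub _ i) (le_trans (le_max_right _ _) (le_of_lt (ord_lt_add_one _)))

theorem rk_child_lt_sup {Q : Type u} (F : ℕ → Term Q) (i : ℕ) :
    rk (F i) < rk (.sup F) :=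
  lt_of_lt_of_le (Ordinal.lt_lsub _ i) (le_of_lt (ord_lt_add_one _))

/-- The quasi-order `⊴` on terms, defined by simultaneous recursion.  A constant `q` is
identified with `⟨q⟩` (so a constant compares with a labeled term by unravelling the label)
and a `⟨⟩`-type term `B` is identified with `B → (empty forest)`, the empty forest being
`⊴`-below everything.  The clauses are:
* `p ⊴ q` iff `p ≤_Q q`;
* `⟨U⟩^{ω^α} ⊴ ⟨V⟩^{ω^β}` iff `U ⊴ V` when `α = β`, iff `⟨U⟩^{ω^α} ⊴ V` when `α > β`, and
  iff `U ⊴ ⟨V⟩^{ω^β}` when `α < β`;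
* for `S = B→⊔_i S_i` and `T = C→⊔_j T_j`: `S ⊴ T` iff either (`B ⊴ C` and `S_i ⊴ T` for
  all `i`), or (`B ⋬ C` and `S ⊴ T_j` for some `j`);
* `⊔` is interpreted as countable supremum: `⊔_i S_i ⊴ ⊔_j T_j` iff every `S_i` is `⊴` some
  `T_j`. -/
def TermLE {Q : Type u} [Preorder Q] : Term Q → Term Q → Prop
  | .const p, .const q => p ≤ q
  | .const p, .jump _ V => TermLE (.const p) V
  | .const p, .node C G =>
      (TermLE (.const p) C) ∨ (¬ TermLE (.const p) C ∧ ∃ j, TermLE (.const p) (G j))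
  | .const p, .sup G => ∃ j, TermLE (.const p) (G j)
  | .jump _ U, .const q => TermLE U (.const q)
  | .jump α U, .jump β V =>
      if α = β then TermLE U V
      else if β < α then TermLE (.jump α U) V
      else TermLE U (.jump β V)
  | .jump α U, .node C G =>
      (TermLE (.jump α U) C) ∨ (¬ TermLE (.jump α U) C ∧ ∃ j, TermLE (.jump α U) (G j))
  | .jump α U, .sup G => ∃ j, TermLE (.jump α U) (G j)
  | .node B F, .const q => TermLE B (.const q) ∧ ∀ i, TermLE (F i) (.const q)
  | .node B F, .jump β V => TermLE B (.jump β V) ∧ ∀ i, TermLE (F i) (.jump β V)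
  | .node B F, .node C G =>
      (TermLE B C ∧ ∀ i, TermLE (F i) (.node C G)) ∨
      (¬ TermLE B C ∧ ∃ j, TermLE (.node B F) (G j))
  | .node B F, .sup G => ∃ j, TermLE (.node B F) (G j)
  | .sup F, .const q => ∀ i, TermLE (F i) (.const q)
  | .sup F, .jump β V => ∀ i, TermLE (F i) (.jump β V)
  | .sup F, .node C G => ∀ i, TermLE (F i) (.node C G)
  | .sup F, .sup G => ∀ i, ∃ j, TermLE (F i) (G j)
termination_by S T => (rk S, rk T)
decreasing_by
  all_goals
    first
      | exact Prod.Lex.left _ _ (rk_lt_jump _ _)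
      | exact Prod.Lex.left _ _ (rk_base_lt_node _ _)
      | exact Prod.Lex.left _ _ (rk_child_lt_node _ _ _)
      | exact Prod.Lex.left _ _ (rk_child_lt_sup _ _)
      | exact Prod.Lex.right _ (rk_lt_jump _ _)
      | exact Prod.Lex.right _ (rk_base_lt_node _ _)
      | exact Prod.Lex.right _ (rk_child_lt_node _ _ _)
      | exact Prod.Lex.right _ (rk_child_lt_sup _ _)

/-- `S ≡ T`: `S ⊴ T` and `T ⊴ S`. -/
def TermEquiv {Q : Type u} [Preorder Q] (S T : Term Q) : Prop := TermLE S T ∧ TermLE T S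

/-- `Tree^n(Q)` for finite `n`: `Tree⁰(Q) = Q` and `Tree^{n+1}(Q) = Tree(Tree^n(Q))`, where
`Tree(Q')` consists of the one point trees `⟨q'⟩` and the trees `⟨q'⟩ → ⊔_i T_i` for
`q' ∈ Q'` and trees `T_i ∈ Tree(Q')`. -/
inductive IsTreeN {Q : Type u} : ℕ → Term Q → Prop
  | const (q : Q) : IsTreeN 0 (.const q)
  | leaf {n : ℕ} {T : Term Q} : IsTreeN n T → IsTreeN (n + 1) (.jump 0 T)
  | node {n : ℕ} {T : Term Q} {F : ℕ → Term Q} :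
      IsTreeN n T → (∀ i, IsTreeN (n + 1) (F i)) → IsTreeN (n + 1) (.node (.jump 0 T) F)

/-- `⊔Tree^n(Q)`: trees in `Tree^n(Q)` and countable disjoint unions of such trees. -/
def IsForestN {Q : Type u} (n : ℕ) (T : Term Q) : Prop :=
  IsTreeN n T ∨ ∃ F : ℕ → Term Q, T = .sup F ∧ ∀ i, IsTreeN n (F i)

/-- The exponent `α` in the normal form `ξ = ω^α + β`, `β < ω^{α+1}`. -/
def olog (ξ : Ordinal.{0}) : Ordinal.{0} := Ordinal.log Ordinal.omega0 ξ

/-- The remainder `β` in the normal form `ξ = ω^α + β`, `β < ω^{α+1}`. -/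
def obeta (ξ : Ordinal.{0}) : Ordinal.{0} := ξ - Ordinal.omega0 ^ olog ξ

/-- `Tree^ξ(Q)` for an ordinal `ξ`: writing `ξ = ω^α + β` with `β < ω^{α+1}`, one has
`Tree^ξ(Q) = Tree^{ω^α}(⟨Tree^β(Q)⟩^{ω^α})` (with `Tree⁰(Q) = Q`), where `Tree^{ω^α}(Q')` is
generated from the constants `q' ∈ Q'` (which are `⟨⟩`-type) by the labelings `⟨T⟩^{ω^γ}` for
`γ < α` (also `⟨⟩`-type) and by `T → ⊔_i F_i` for `⟨⟩`-type `T` and trees `F_i`. -/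
inductive IsTreeXi {Q : Type u} : Ordinal.{0} → Term Q → Prop
  | const {ξ : Ordinal.{0}} (q : Q) (h : obeta ξ = 0) : IsTreeXi ξ (Term.const q)
  | atom {ξ : Ordinal.{0}} {S : Term Q} (h : obeta ξ ≠ 0) (hS : IsTreeXi (obeta ξ) S) :
      IsTreeXi ξ (Term.jump (olog ξ) S)
  | jump {ξ β : Ordinal.{0}} {T : Term Q} (h0 : ξ ≠ 0) (hβ : β < olog ξ) (hT : IsTreeXi ξ T) :
      IsTreeXi ξ (Term.jump β T)
  | node {ξ : Ordinal.{0}} {B : Term Q} {F : ℕ → Term Q} (h0 : ξ ≠ 0) (hB : IsTreeXi ξ B)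
      (hbase : IsBase B) (hF : ∀ i, IsTreeXi ξ (F i)) : IsTreeXi ξ (Term.node B F)

/-- `⊔Tree^ξ(Q)`: trees in `Tree^ξ(Q)` and countable disjoint unions of such trees. -/
def IsForestXi {Q : Type u} (ξ : Ordinal.{0}) (T : Term Q) : Prop :=
  IsTreeXi ξ T ∨ ∃ F : ℕ → Term Q, T = .sup F ∧ ∀ i, IsTreeXi ξ (F i)

/-- The `k`-fold labeling `⟨⟨…⟨T⟩…⟩⟩`. -/
def labelIter {Q : Type u} : ℕ → Term Q → Term Q
  | 0, T => T
  | k + 1, T => .jump 0 (labelIter k T)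

/-- `ι(T) = T[⟨q⟩^k / q]`: replace every occurrence of a constant `q` in `T` by `⟨q⟩^k`. -/
def iotaSubst {Q : Type u} (k : ℕ) : Term Q → Term Q
  | .const q => labelIter k (.const q)
  | .jump α T => .jump α (iotaSubst k T)
  | .node B F => .node (iotaSubst k B) fun i => iotaSubst k (F i)
  | .sup F => .sup fun i => iotaSubst k (F i)

/-! ### The pointclasses `Σ_T` -/

/-- `Σ⁰_ξ`-measurability of a Baire-space valued map on the subspace `D ⊆ ω^ω`. -/
def SigmaMeasurableOn (ξ : Ordinal.{0}) (D : Set Baire) (f : Baire → Baire) : Prop :=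
  ∀ σ : List ℕ, SigmaZero (↥D) ξ ((fun x : ↥D => f x.1) ⁻¹' cylB σ)

/-- The pointclass `Σ_T` of `Q`-valued functions associated to a term `T`, relativized to a
domain `D ⊆ ω^ω` (a function defined on a nonempty closed or open subset of `ω^ω` is
identified with the corresponding total function; `SigmaT T D A` expresses `A↾D ∈ Σ_T`):
* `Σ_q` consists only of the constant function `q`;
* `A ∈ Σ_{⊔_i S_i}` iff there is a partition of the domain into relatively clopen sets `C_i`
  with `A↾C_i ∈ Σ_{S_i}` for all `i`;
* `A ∈ Σ_{T→S}` (`S = ⊔_i F_i`) iff there is a relatively open set `V` with `A↾(D∖V) ∈ Σ_T`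
  and `A↾(D∩V) ∈ Σ_S`;
* `A ∈ Σ_{⟨T⟩^{ω^α}}` iff `A = B ∘ D'` for some `Σ⁰_{1+ω^α}`-measurable `D' : ω^ω → ω^ω` and
  some `B ∈ Σ_T` (for `α = 0` this is the clause for the jump `Σ_{⟨T⟩}`, with a
  `Σ⁰₂`-measurable `D'`). -/
inductive SigmaT {Q : Type u} : Term Q → Set Baire → (Baire → Q) → Prop
  | const (q : Q) (D : Set Baire) (A : Baire → Q) (h : ∀ x ∈ D, A x = q) :
      SigmaT (Term.const q) D A
  | sup (S : ℕ → Term Q) (D : Set Baire) (A : Baire → Q) (C : ℕ → Set Baire)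
      (hcl : ∀ i, IsClopen ((fun x : ↥D => x.1) ⁻¹' C i))
      (hpart : ∀ x ∈ D, ∃! i, x ∈ C i)
      (h : ∀ i, SigmaT (S i) (D ∩ C i) A) :
      SigmaT (Term.sup S) D A
  | node (B : Term Q) (F : ℕ → Term Q) (D : Set Baire) (A : Baire → Q) (V : Set Baire)
      (hV : IsOpen ((fun x : ↥D => x.1) ⁻¹' V))
      (h1 : SigmaT B (D \ V) A)
      (h2 : SigmaT (Term.sup F) (D ∩ V) A) :
      SigmaT (Term.node B F) D A
  | jump (α : Ordinal.{0}) (T : Term Q) (D : Set Baire) (A : Baire → Q)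
      (D' : Baire → Baire) (B : Baire → Q)
      (hD : SigmaMeasurableOn (1 + Ordinal.omega0 ^ α) D D')
      (hB : SigmaT T Set.univ B)
      (hA : ∀ x ∈ D, A x = B (D' x)) :
      SigmaT (Term.jump α T) D A

/-- A total function is in `Σ_T` if it is so on the whole space. -/
def MemSigmaT {Q : Type u} (T : Term Q) (A : Baire → Q) : Prop := SigmaT T Set.univ A

/-- `Ω` is `Σ_T`-complete: `Ω ∈ Σ_T` and every function in `Σ_T` is Wadge reducible to `Ω`. -/
def SigmaTComplete {Q : Type u} [Preorder Q] (T : Term Q) (Ω : Baire → Q) : Prop :=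
  MemSigmaT T Ω ∧ ∀ A : Baire → Q, MemSigmaT T A → WadgeLE A Ω

/-! ### `ω̂ = ω ∪ {pass}`, conciliatory functions -/

/-- `ω̂ = ω ∪ {pass}`; `none` plays the role of the symbol `pass`. -/
abbrev Hat : Type := Option ℕ

instance : TopologicalSpace Hat := ⊥
instance : DiscreteTopology Hat := ⟨rfl⟩
instance : TopologicalSpace (Option Hat) := ⊥
instance : DiscreteTopology (Option Hat) := ⟨rfl⟩

/-- `ω̂^ω`, with the product topology of the discrete space `ω̂`. -/
abbrev HatBaire : Type := ℕ → Hat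

/-- Basic clopen subsets of `ω̂^ω`. -/
def cylH (σ : List Hat) : Set HatBaire := {X | ∀ i : Fin σ.length, X i = σ.get i}

/-- The index of the `k`-th non-`pass` entry of `X ∈ ω̂^ω`, if it exists. -/
def nthSome (X : HatBaire) : ℕ → Option ℕ
  | 0 => if h : ∃ i, (X i).isSome then some (Nat.find h) else none
  | k + 1 =>
    match nthSome X k with
    | none => none
    | some i => if h : ∃ j, i < j ∧ (X j).isSome then some (Nat.find h) else none

theorem nthSome_isSome (X : HatBaire) : ∀ k i, nthSome X k = some i → (X i).isSome := by
  intro k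
  induction k with
  | zero =>
    intro i h
    simp only [nthSome] at h
    split at h
    · rename_i hex
      cases h
      exact Nat.find_spec hex
    · exact absurd h (by simp)
  | succ k ih =>
    intro i h
    simp only [nthSome] at h
    split at h
    · exact absurd h (by simp)
    · rename_i j hj
      split at h
      · rename_i hex
        cases h
        exact (Nat.find_spec hex).2
      · exact absurd h (by simp)

theorem nthSome_succ_none {X : HatBaire} {k : ℕ} (h : nthSome X k = none) :
    nthSome X (k + 1) = none := by
  simp only [nthSome, h]

/-- `X^p ∈ ω^{≤ω}`: the finite or infinite sequence obtained from `X ∈ ω̂^ω` by deleting all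
occurrences of `pass`. -/
def strip (X : HatBaire) : Stream'.Seq ℕ :=
  ⟨fun k => (nthSome X k).bind fun i => X i, by
    intro n h
    have hn : nthSome X n = none := by
      cases hh : nthSome X n with
      | none => rfl
      | some i =>
        exfalso
        have h1 := nthSome_isSome X n i hh
        replace h : (nthSome X n).bind (fun i => X i) = none := h
        rw [hh, Option.bind_some] at h
        rw [h] at h1
        simp at h1
    show (nthSome X (n + 1)).bind _ = none
    rw [nthSome_succ_none hn, Option.bind_none]⟩

/-- The natural inclusion `ω^ω ⊆ ω^{≤ω}`. -/
def ofBaire (X : Baire) : Stream'.Seq ℕ :=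
  ⟨fun n => some (X n), by intro n h; simp at h⟩

/-- The natural inclusion `ω^{<ω} ⊆ ω^{≤ω}`. -/
def ofList (σ : List ℕ) : Stream'.Seq ℕ := Stream'.Seq.ofList σ

/-- The initial segment (prefix) relation on `ω^{≤ω}`. -/
def SeqPrefix (σ τ : Stream'.Seq ℕ) : Prop :=
  ∀ n a, σ.get? n = some a → τ.get? n = some a

/-- A `Q`-valued function on `ω̂^ω` is conciliatory if its value depends only on the
pass-deleted input: `X^p = Y^p → A(X) = A(Y)`. -/
def ConciliatoryQ {Q : Type*} (A : HatBaire → Q) : Prop :=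
  ∀ X Y, strip X = strip Y → A X = A Y

/-- `Ψ : ω̂^ω → ω̂^ω` is conciliatory if `X^p = Y^p` implies `Ψ(X)^p = Ψ(Y)^p`. -/
def ConciliatoryF (Ψ : HatBaire → HatBaire) : Prop :=
  ∀ X Y, strip X = strip Y → strip (Ψ X) = strip (Ψ Y)

/-- `Ψ ≡_p Φ`: `Ψ(X)^p = Φ(X)^p` for all `X`. -/
def PEquiv (Ψ Φ : HatBaire → HatBaire) : Prop := ∀ X, strip (Ψ X) = strip (Φ X)

/-- `Σ⁰_ξ`-measurability for self-maps of `ω̂^ω`. -/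
def SigmaMeasurableH (ξ : Ordinal.{0}) (Ψ : HatBaire → HatBaire) : Prop :=
  ∀ σ : List Hat, SigmaZero HatBaire ξ (Ψ ⁻¹' cylH σ)

/-- A conciliatory `U` is `Σ⁰_ξ`-universal if it is `Σ⁰_ξ`-measurable and every
`Σ⁰_ξ`-measurable conciliatory `G` satisfies `G ≡_p U ∘ θ` for some continuous `θ`. -/
def SigmaUniversal (ξ : Ordinal.{0}) (U : HatBaire → HatBaire) : Prop :=
  SigmaMeasurableH ξ U ∧
    ∀ G : HatBaire → HatBaire, ConciliatoryF G → SigmaMeasurableH ξ G →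
      ∃ θ : HatBaire → HatBaire, Continuous θ ∧ PEquiv G (U ∘ θ)

/-- `Ψ` is initializable if for every `τ ∈ ω̂^{<ω}` there is a continuous `θ_τ : ω̂^ω → [τ]`
with `Ψ ≡_p Ψ ∘ θ_τ`. -/
def InitializableH (Ψ : HatBaire → HatBaire) : Prop :=
  ∀ τ : List Hat, ∃ θ : HatBaire → HatBaire,
    Continuous θ ∧ (∀ X, θ X ∈ cylH τ) ∧ PEquiv Ψ (Ψ ∘ θ)

/-! ### The mind-change coding -/

/-- `ω̂^{≤ω}`: finite or infinite sequences over `ω̂` (the value `none` of the outer `Option`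
means "beyond the length of the sequence"). -/
abbrev HatSeq : Type := {Y : ℕ → Option Hat // ∀ n, Y n = none → Y (n + 1) = none}

/-- The pass-deleted sequence `Y^p ∈ ω^{≤ω}` of `Y ∈ ω̂^{≤ω}`. -/
def stripHS (Y : HatSeq) : Stream'.Seq ℕ := strip fun n => (Y.1 n).join

/-- The mind-change coding `Y → Z` for `Y ∈ ω̂^{≤ω}` of length `ℓ` and `Z ∈ ω̂^ω`:
`(Y→Z)(n) = 2·Y(n)` if `n < ℓ` and `Y(n) ≠ pass`; `pass` if `n < ℓ` and `Y(n) = pass`;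
`2·Z(0)+1` if `n = ℓ`; and `Z(n−ℓ)` if `n > ℓ`.  When `Y` is infinite or `Z^p` is empty,
`Y→Z` is `Y` with each non-pass entry doubled (padded with passes). -/
def arrowSeq (Y : HatSeq) (Z : HatBaire) : HatBaire := fun n =>
  match Y.1 n with
  | some (some k) => some (2 * k)
  | some none => none
  | none =>
    if ∀ m, Z m = none then none
    else if n = sInf {m | Y.1 m = none} then (Z 0).map fun z => 2 * z + 1
    else Z (n - sInf {m | Y.1 m = none})

/-- The canonical `π₀`: the part of `X` before the first mind change, with all entries halved
(and passes from the first mind change on). -/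
def pi0 (X : HatBaire) : HatBaire := fun n =>
  if ∃ m ≤ n, ∃ k, X m = some (2 * k + 1) then none
  else (X n).map fun k => k / 2

/-- The canonical `π₁`: the decoded part of `X` from the first mind change on (and all passes
if no mind change ever occurs). -/
def pi1 (X : HatBaire) : HatBaire := fun n =>
  if ∃ m, ∃ k, X m = some (2 * k + 1) then
    if n = 0 then (X (sInf {m | ∃ k, X m = some (2 * k + 1)})).map fun k => k / 2
    else X (sInf {m | ∃ k, X m = some (2 * k + 1)} + n)
  else none

/-- The mind-change operation on functions:
`(A→B)(X) = A(π₀ X)` if `π₁(X)^p` is empty, and `B(π₁ X)` otherwise. -/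
def mcArrow {Q : Type*} (A B : HatBaire → Q) : HatBaire → Q := fun X =>
  if ∀ n, pi1 X n = none then A (pi0 X) else B (pi1 X)

/-- The `Σ_T`-complete functions `Ω_T`, relative to a fixed `Σ⁰₂`-universal initializable
conciliatory function `𝒰`:
* `Ω_{⟨q⟩}` is the constant function with value `q` (equivalently `Ω_q ∘ 𝒰`);
* `Ω_{⟨S⟩} = Ω_S ∘ 𝒰`;
* `Ω_{⟨S⟩→F} = Ω_{⟨S⟩} → Ω_F`: the value is `Ω_{⟨S⟩}(π₀ X)` if no mind change occurs in `X`,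
  and `Ω_F(π₁ X)` otherwise (where `Ω_F(n⌢X') = Ω_{F_n}(X')`);
* `Ω_{⊔_n T_n}(n⌢X) = Ω_{T_n}(X)`. -/
def Omega {Q : Type u} (U : HatBaire → HatBaire) : Term Q → HatBaire → Q
  | .const q => fun _ => q
  | .jump _ T => fun X => Omega U T (U X)
  | .node B F => fun X =>
      if ∀ n, pi1 X n = none then Omega U B (pi0 X)
      else Omega U (F ((pi1 X 0).getD 0)) fun n => pi1 X (n + 1)
  | .sup F => fun X => Omega U (F ((X 0).getD 0)) fun n => X (n + 1)

/-- `Ω_T` as a function on `ω × ω̂^ω`: for a `⊔`-type term `⊔_n T_n` this is the function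
`(n, X) ↦ Ω_{T_n}(X)`; a tree is treated as a forest with a single (repeated) component,
i.e. `Ω_T` is composed with the (Wadge-irrelevant) projection. -/
def OmegaC {Q : Type u} (U : HatBaire → HatBaire) (T : Term Q) : ℕ × HatBaire → Q :=
  match T with
  | .sup F => fun p => Omega U (F p.1) p.2
  | t => fun p => Omega U t p.2


/-!
The universal function reads the pass-deleted input as a play of moves `Nat.pair k a`: each move
erases every earlier entry written at a position `≥ k` and, when `a = v + 1`, writes `v` at
position `k`; the output lists the entries that are never erased. Being erased is an open
condition, which makes this function `Σ⁰₂`-measurable, and a prefix ending with the move `0`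
erases everything written so far, which makes it initializable.

For universality, let `G` be `Σ⁰₂`-measurable. The set of `X` for which `σ` is a prefix of
`G(X)^p` is `Σ⁰₂`, hence an increasing union of closed sets `C σ m`. The reduction runs a
finite-injury guessing argument: it keeps a stack of candidates `(digit, m)` for successive
digits of `G(X)^p`, and a candidate is replaced by the next one as soon as the finite part of `X`
read so far is disjoint from its closed set. The candidate for a correct digit eventually
settles, while at the first missing digit every candidate is eventually refuted. At each stage
the reduction erases from the level of the first refuted candidate and writes the digit of its
replacement, so the entries that survive are exactly the settled digits of `G(X)^p`.
-/

section SigmaTwo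

variable {T : Type*} [TopologicalSpace T]

theorem SigmaZero.isOpen_of_eq_one {α : Ordinal.{0}} {s : Set T} (h : SigmaZero T α s)
    (hα : α = 1) : IsOpen s := by
  cases h with
  | of_isOpen h => exact h
  | iUnion hα' => exact absurd (hα ▸ hα') (lt_irrefl 1)

theorem SigmaZero.one_le {α : Ordinal.{0}} {s : Set T} (h : SigmaZero T α s) : 1 ≤ α := by
  cases h with
  | of_isOpen => exact le_rfl
  | iUnion hα => exact hα.le

theorem sigmaZero_two_iff_isGδ_compl {s : Set T} : SigmaZero T 2 s ↔ IsGδ sᶜ := by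
  have one_lt_two : (1 : Ordinal.{0}) < 2 := one_lt_two
  constructor
  · intro h
    generalize hα : (2 : Ordinal.{0}) = α at h
    rcases h with h | ⟨-, f, β, hβ, hf⟩
    · exact absurd hα (ne_of_gt one_lt_two)
    subst hα
    rw [Set.compl_iUnion]
    refine IsGδ.iInter fun n => ((hf n).isOpen_of_eq_one ?_).isGδ
    refine le_antisymm ?_ (hf n).one_le
    simpa [← one_add_one_eq_two, Order.lt_add_one_iff] using hβ n
  · intro h
    obtain ⟨f, hf, hs⟩ := isGδ_iff_eq_iInter_nat.mp h
    rw [← compl_compl s, hs, Set.compl_iInter]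
    exact SigmaZero.iUnion one_lt_two _ (fun _ => 1) (fun _ => one_lt_two)
      fun n => .of_isOpen ((compl_compl (f n)).symm ▸ hf n)

theorem _root_.IsClosed.sigmaZero_two {s : Set T} (h : IsClosed s) : SigmaZero T 2 s :=
  sigmaZero_two_iff_isGδ_compl.mpr h.isOpen_compl.isGδ

theorem _root_.IsOpen.sigmaZero_two [PerfectlyNormalSpace T] {s : Set T} (h : IsOpen s) :
    SigmaZero T 2 s :=
  sigmaZero_two_iff_isGδ_compl.mpr h.isClosed_compl.isGδ

theorem sigmaZero_two_iUnion {ι : Sort*} [Countable ι] {f : ι → Set T}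
    (h : ∀ i, SigmaZero T 2 (f i)) : SigmaZero T 2 (⋃ i, f i) := by
  simp only [sigmaZero_two_iff_isGδ_compl, Set.compl_iUnion] at h ⊢
  exact IsGδ.iInter h

theorem sigmaZero_two_iInter {ι : Sort*} [Finite ι] {f : ι → Set T}
    (h : ∀ i, SigmaZero T 2 (f i)) : SigmaZero T 2 (⋂ i, f i) := by
  simp only [sigmaZero_two_iff_isGδ_compl, Set.compl_iInter] at h ⊢
  exact IsGδ.iUnion h

theorem SigmaZero.two_union {s t : Set T} (hs : SigmaZero T 2 s) (ht : SigmaZero T 2 t) :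
    SigmaZero T 2 (s ∪ t) := by
  rw [sigmaZero_two_iff_isGδ_compl, Set.compl_union] at *
  exact hs.inter ht

theorem SigmaZero.two_inter {s t : Set T} (hs : SigmaZero T 2 s) (ht : SigmaZero T 2 t) :
    SigmaZero T 2 (s ∩ t) := by
  rw [sigmaZero_two_iff_isGδ_compl, Set.compl_inter] at *
  exact hs.union ht

theorem SigmaZero.exists_monotone_isClosed {s : Set T} (h : SigmaZero T 2 s) :
    ∃ f : ℕ → Set T, (∀ n, IsClosed (f n)) ∧ Monotone f ∧ s = ⋃ n, f n := by
  obtain ⟨g, hg, hs⟩ := isGδ_iff_eq_iInter_nat.mp (sigmaZero_two_iff_isGδ_compl.mp h)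
  refine ⟨Set.accumulate fun n => (g n)ᶜ, fun n => ?_, Set.monotone_accumulate, ?_⟩
  · exact (Set.finite_Iic n).isClosed_biUnion fun k _ => (hg k).isClosed_compl
  · rw [Set.iUnion_accumulate, ← Set.compl_iInter, ← hs, compl_compl]

end SigmaTwo

section Strip

theorem _root_.Nat.count_congr {p q : ℕ → Prop} [DecidablePred p] [DecidablePred q] {n : ℕ}
    (h : ∀ k < n, p k ↔ q k) : Nat.count p n = Nat.count q n :=
  le_antisymm (Nat.count_mono_left fun k hk => (h k hk).mp)
    (Nat.count_mono_left fun k hk => (h k hk).mpr)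

theorem nthSome_spec {X : HatBaire} {p i : ℕ} (h : nthSome X p = some i) :
    (X i).isSome ∧ Nat.count (fun j => (X j).isSome) i = p := by
  induction p generalizing i with
  | zero =>
    rw [nthSome] at h
    split_ifs at h with hex
    cases h
    exact ⟨Nat.find_spec hex, Nat.count_iff_forall_not.mpr fun m hm => Nat.find_min hex hm⟩
  | succ p ih =>
    rw [nthSome] at h
    rcases hp : nthSome X p with _ | i'
    · simp [hp] at h
    simp only [hp] at h
    split_ifs at h with hex
    cases h
    obtain ⟨hlt, hsome⟩ := Nat.find_spec hex
    obtain ⟨hsome', hcount'⟩ := ih hp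
    refine ⟨hsome, le_antisymm ?_ ?_⟩
    · by_contra hgt
      have hlt' : Nat.count (fun j => (X j).isSome) (i' + 1) <
          Nat.count (fun j => (X j).isSome) (Nat.find hex) := by
        rw [Nat.count_succ_eq_succ_count_iff.mpr hsome', hcount']; omega
      obtain ⟨m, hm, hms⟩ := Nat.exists_of_count_lt_count hlt'
      exact Nat.find_min hex hm.2 ⟨hm.1, hms⟩
    · rw [← hcount', ← Nat.count_succ_eq_succ_count_iff.mpr hsome']
      exact Nat.count_monotone _ hlt

theorem nthSome_count {X : HatBaire} {i : ℕ} (hi : (X i).isSome) :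
    nthSome X (Nat.count (fun j => (X j).isSome) i) = some i := by
  generalize hp : Nat.count (fun j => (X j).isSome) i = p
  induction p generalizing i with
  | zero =>
    have hex : ∃ j, (X j).isSome := ⟨i, hi⟩
    rw [nthSome, dif_pos hex, Option.some_inj, Nat.find_eq_iff]
    exact ⟨hi, fun m hm => Nat.count_iff_forall_not.mp hp m hm⟩
  | succ p ih =>
    have hcard : ∀ hf : (Set.ofPred fun j => (X j).isSome).Finite, p < hf.toFinset.card :=
      fun hf => by have := Nat.count_lt_card hf hi; omega
    set i' := Nat.nth (fun j => (X j).isSome) p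
    have hsome' : (X i').isSome := Nat.nth_mem p hcard
    have hcount' : Nat.count (fun j => (X j).isSome) i' = p := Nat.count_nth hcard
    have hlt : i' < i := Nat.lt_of_count_lt_count (p := fun j => (X j).isSome) (by omega)
    have hex : ∃ j, i' < j ∧ (X j).isSome := ⟨i, hlt, hi⟩
    rw [nthSome, ih hsome' hcount']
    simp only
    rw [dif_pos hex, Option.some_inj, Nat.find_eq_iff]
    refine ⟨⟨hlt, hi⟩, fun m hm ⟨him, hms⟩ => ?_⟩
    have := Nat.count_strict_mono (p := fun j => (X j).isSome) hsome' him
    have := Nat.count_strict_mono (p := fun j => (X j).isSome) hms hm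
    omega

theorem nthSome_eq_some_iff {X : HatBaire} {p i : ℕ} :
    nthSome X p = some i ↔ (X i).isSome ∧ Nat.count (fun j => (X j).isSome) i = p :=
  ⟨nthSome_spec, fun ⟨hi, hp⟩ => hp ▸ nthSome_count hi⟩

theorem strip_get?_eq_some_iff {X : HatBaire} {p v : ℕ} :
    (strip X).get? p = some v ↔ ∃ i, X i = some v ∧ Nat.count (fun j => (X j).isSome) i = p := by
  change (nthSome X p).bind X = some v ↔ _
  simp only [Option.bind_eq_some_iff, nthSome_eq_some_iff]
  exact ⟨fun ⟨i, ⟨_, hp⟩, hv⟩ => ⟨i, hv, hp⟩, fun ⟨i, hv, hp⟩ => ⟨i, ⟨by simp [hv], hp⟩, hv⟩⟩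

theorem strip_get?_some (f : ℕ → ℕ) (p : ℕ) : (strip fun n => some (f n)).get? p = some (f p) :=
  strip_get?_eq_some_iff.mpr ⟨p, rfl, by simp⟩

theorem strip_get?_of_enum {Y : HatBaire} {D : ℕ → Prop} {ν : ℕ → ℕ} (hD : Antitone D)
    (hν : StrictMonoOn ν {k | D k}) (hY : ∀ i, (Y i).isSome ↔ ∃ k, D k ∧ ν k = i) (k : ℕ) :
    (strip Y).get? k = if D k then Y (ν k) else none := by
  have hcount : ∀ k, D k → Nat.count (fun j => (Y j).isSome) (ν k) = k := by
    intro k hk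
    have hsub : ↑(Finset.range k) ⊆ {k | D k} := fun k' hk' => hD (Finset.mem_range.mp hk').le hk
    have : {i ∈ Finset.range (ν k) | (Y i).isSome} = (Finset.range k).image ν := by
      ext i
      simp only [Finset.mem_filter, Finset.mem_range, Finset.mem_image, hY]
      constructor
      · rintro ⟨hi, k', hk', rfl⟩
        exact ⟨k', (hν.lt_iff_lt hk' hk).mp hi, rfl⟩
      · rintro ⟨k', hk', rfl⟩
        exact ⟨hν (hsub (by simpa using hk')) hk hk', k', hsub (by simpa using hk'), rfl⟩
    rw [Nat.count_eq_card_filter_range, this, Finset.card_image_of_injOn (hν.injOn.mono hsub),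
      Finset.card_range]
  split_ifs with hk
  · change (nthSome Y k).bind Y = Y (ν k)
    rw [nthSome_eq_some_iff.mpr ⟨(hY _).mpr ⟨k, hk, rfl⟩, hcount k hk⟩, Option.bind_some]
  · refine Option.eq_none_iff_forall_ne_some.mpr fun v hv => ?_
    obtain ⟨i, hi, hcnt⟩ := strip_get?_eq_some_iff.mp hv
    obtain ⟨k', hk', rfl⟩ := (hY i).mp (by simp [hi])
    rw [hcount k' hk'] at hcnt
    exact hk (hcnt ▸ hk')

end Strip

section Concatenation

theorem _root_.Stream'.Seq.get?_ofList_append {α : Type*} (l : List α) (s : Stream'.Seq α)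
    (p : ℕ) : ((Stream'.Seq.ofList l).append s).get? p =
      if p < l.length then l[p]? else s.get? (p - l.length) := by
  induction l generalizing p with
  | nil => simp [Stream'.Seq.ofList_nil, Stream'.Seq.nil_append]
  | cons a l ih =>
    rw [Stream'.Seq.ofList_cons, Stream'.Seq.cons_append]
    cases p with
    | zero => simp
    | succ p => simp [ih]

theorem strip_eq_of_head_eq_none {X : HatBaire} (h : X 0 = none) :
    strip X = strip fun n => X (n + 1) := by
  refine Stream'.Seq.ext fun p => Option.ext fun v => ?_
  simp only [strip_get?_eq_some_iff]
  constructor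
  · rintro ⟨_ | i, hv, hp⟩
    · simp [h] at hv
    · exact ⟨i, hv, by simpa [Nat.count_succ', h] using hp⟩
  · rintro ⟨i, hv, hp⟩
    exact ⟨i + 1, hv, by simpa [Nat.count_succ', h] using hp⟩

theorem strip_eq_cons_of_head_eq_some {X : HatBaire} {a : ℕ} (h : X 0 = some a) :
    strip X = Stream'.Seq.cons a (strip fun n => X (n + 1)) := by
  refine Stream'.Seq.ext fun p => Option.ext fun v => ?_
  cases p with
  | zero =>
    simp only [strip_get?_eq_some_iff, Stream'.Seq.get?_cons_zero, Option.some.injEq]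
    constructor
    · rintro ⟨_ | i, hv, hp⟩
      · simpa [h] using hv
      · simp [Nat.count_succ', h] at hp
    · rintro rfl
      exact ⟨0, h, Nat.count_zero _⟩
  | succ p =>
    simp only [strip_get?_eq_some_iff, Stream'.Seq.get?_cons_succ]
    constructor
    · rintro ⟨_ | i, hv, hp⟩
      · simp at hp
      · exact ⟨i, hv, by simpa [Nat.count_succ', h] using hp⟩
    · rintro ⟨i, hv, hp⟩
      exact ⟨i + 1, hv, by simpa [Nat.count_succ', h] using hp⟩

def appendStrH (ρ : List Hat) (X : HatBaire) : HatBaire := fun i =>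
  if h : i < ρ.length then ρ[i] else X (i - ρ.length)

theorem continuous_appendStrH (ρ : List Hat) : Continuous (appendStrH ρ) := by
  refine continuous_pi fun i => ?_
  by_cases h : i < ρ.length
  · simpa [appendStrH, h] using continuous_const
  · simpa [appendStrH, h] using continuous_apply _

theorem appendStrH_mem_cylH (ρ τ : List Hat) (X : HatBaire) :
    appendStrH (τ ++ ρ) X ∈ cylH τ := fun i => by
  have hi : (i : ℕ) < (τ ++ ρ).length := by simp only [List.length_append]; omega
  simp only [appendStrH, dif_pos hi, List.getElem_append_left i.isLt, List.get_eq_getElem]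

theorem strip_appendStrH (ρ : List Hat) (X : HatBaire) :
    strip (appendStrH ρ X) = (Stream'.Seq.ofList (ρ.filterMap id)).append (strip X) := by
  induction ρ with
  | nil =>
    have : appendStrH [] X = X := funext fun i => by simp [appendStrH]
    simp [this, Stream'.Seq.ofList_nil, Stream'.Seq.nil_append]
  | cons a ρ ih =>
    have htail : (fun n => appendStrH (a :: ρ) X (n + 1)) = appendStrH ρ X := by
      funext n; simp [appendStrH]
    cases a with
    | none =>
      rw [strip_eq_of_head_eq_none (by simp [appendStrH]), htail, ih]
      simp
    | some a =>
      rw [strip_eq_cons_of_head_eq_some (a := a) (by simp [appendStrH]), htail, ih]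
      simp [Stream'.Seq.ofList_cons, Stream'.Seq.cons_append]

theorem strip_appendStrH_replicate_none (K : ℕ) (Y : HatBaire) :
    strip (appendStrH (List.replicate K none) Y) = strip Y := by
  rw [strip_appendStrH]
  simp [Stream'.Seq.ofList_nil, Stream'.Seq.nil_append]

end Concatenation

section Topology

theorem isLocallyConstant_of_eq_on_cylinder {E : ℕ → Type*} [∀ n, TopologicalSpace (E n)]
    [∀ n, DiscreteTopology (E n)] {α : Type*} {f : (∀ n, E n) → α} (n : ℕ)
    (h : ∀ x, ∀ y ∈ PiNat.cylinder x n, f y = f x) : IsLocallyConstant f :=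
  (IsLocallyConstant.iff_exists_open f).mpr fun x =>
    ⟨_, PiNat.isOpen_cylinder E x n, PiNat.self_mem_cylinder x n, h x⟩

theorem isOpen_setOf_strip_get?_eq_some (p v : ℕ) :
    IsOpen {X : HatBaire | (strip X).get? p = some v} := by
  simp only [strip_get?_eq_some_iff, Set.ofPred_exists]
  refine isOpen_iUnion fun i => ?_
  have : IsLocallyConstant fun X : HatBaire => (X i, Nat.count (fun j => (X j).isSome) i) :=
    isLocallyConstant_of_eq_on_cylinder (i + 1) fun X Y hY => by
      rw [PiNat.mem_cylinder_iff] at hY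
      rw [hY i (Nat.lt_succ_self i), Nat.count_congr fun j hj => by rw [hY j (by omega)]]
  simpa using (this.isClopen_fiber (some v, p)).isOpen

theorem isClosed_setOf_strip_get?_eq_none (p : ℕ) :
    IsClosed {X : HatBaire | (strip X).get? p = none} := by
  have : {X : HatBaire | (strip X).get? p = none} = (⋃ v, {X | (strip X).get? p = some v})ᶜ := by
    ext X
    simp [Option.eq_none_iff_forall_ne_some]
  rw [this]
  exact (isOpen_iUnion fun v => isOpen_setOf_strip_get?_eq_some p v).isClosed_compl

theorem cylH_ofFn (X : HatBaire) (n : ℕ) :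
    cylH (List.ofFn fun i : Fin n => X i) = PiNat.cylinder X n := by
  ext Y
  simp only [cylH, PiNat.mem_cylinder_iff, Set.mem_ofPred_eq, List.get_eq_getElem,
    List.getElem_ofFn]
  exact ⟨fun h i hi => h ⟨i, by simpa using hi⟩, fun h i => h i (by simpa using i.isLt)⟩

theorem isOpen_eq_iUnion_cylH {A : Set HatBaire} (hA : IsOpen A) :
    A = ⋃ σ : {σ : List Hat // cylH σ ⊆ A}, cylH σ := by
  refine subset_antisymm (fun X hX => ?_) (Set.iUnion_subset fun σ => σ.2)
  obtain ⟨_, ⟨Y, n, rfl⟩, hXY, hsub⟩ :=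
    (PiNat.isTopologicalBasis_cylinders _).exists_subset_of_mem_open hX hA
  rw [← PiNat.mem_cylinder_iff_eq.mp hXY, ← cylH_ofFn] at hsub
  exact Set.mem_iUnion.mpr ⟨⟨_, hsub⟩, by
    rw [cylH_ofFn]; exact PiNat.self_mem_cylinder X n⟩

theorem SigmaMeasurableH.sigmaZero_two_preimage {G : HatBaire → HatBaire}
    (hG : SigmaMeasurableH 2 G) {A : Set HatBaire} (hA : IsOpen A) :
    SigmaZero HatBaire 2 (G ⁻¹' A) := by
  rw [isOpen_eq_iUnion_cylH hA, Set.preimage_iUnion]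
  exact sigmaZero_two_iUnion fun σ => hG σ.1

theorem sigmaMeasurableH_two_of_forall {Ψ : HatBaire → HatBaire}
    (h : ∀ p a, SigmaZero HatBaire 2 {X | Ψ X p = a}) : SigmaMeasurableH 2 Ψ := by
  intro σ
  have : Ψ ⁻¹' cylH σ = ⋂ i : Fin σ.length, {X | Ψ X i = σ.get i} := by
    ext X; simp [cylH]
  rw [this]
  exact sigmaZero_two_iInter fun i => h _ _

end Topology

section Universal

def written (m : ℕ) : Hat :=
  match m.unpair.2 with
  | 0 => none
  | v + 1 => some v

/-- Reading a move `m` as `Nat.pair k a`, the move erases every earlier entry written at a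
position `≥ k` and then, if `a = v + 1`, writes `v` at position `k`. `survivors s` keeps, at the
time they were written, the entries of the play `s` that are never erased. -/
def survivors (s : Stream'.Seq ℕ) (p : ℕ) : Hat :=
  match s.get? p with
  | none => none
  | some m =>
    if ∃ q > p, ∃ m', s.get? q = some m' ∧ m'.unpair.1 ≤ m.unpair.1 then none else written m

def universalSigma2 (X : HatBaire) : HatBaire := survivors (strip X)

theorem conciliatoryF_universalSigma2 : ConciliatoryF universalSigma2 := fun X Y h => by
  rw [universalSigma2, universalSigma2, h]

theorem isOpen_setOf_erased (p k : ℕ) :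
    IsOpen {X : HatBaire | ∃ q > p, ∃ m, (strip X).get? q = some m ∧ m.unpair.1 ≤ k} := by
  have : {X : HatBaire | ∃ q > p, ∃ m, (strip X).get? q = some m ∧ m.unpair.1 ≤ k} =
      ⋃ q, ⋃ m, {_X | p < q ∧ m.unpair.1 ≤ k} ∩ {X | (strip X).get? q = some m} := by
    ext X
    simp only [Set.mem_ofPred_eq, Set.mem_iUnion, Set.mem_inter_iff]
    exact ⟨fun ⟨q, hq, m, hm, hk⟩ => ⟨q, m, ⟨hq, hk⟩, hm⟩,
      fun ⟨q, m, ⟨hq, hk⟩, hm⟩ => ⟨q, hq, m, hm, hk⟩⟩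
  rw [this]
  exact isOpen_iUnion fun q => isOpen_iUnion fun m =>
    isOpen_const.inter (isOpen_setOf_strip_get?_eq_some q m)

theorem sigmaZero_two_setOf_universalSigma2_eq (p : ℕ) (a : Hat) :
    SigmaZero HatBaire 2 {X | universalSigma2 X p = a} := by
  set E := fun k => {X : HatBaire | ∃ q > p, ∃ m, (strip X).get? q = some m ∧ m.unpair.1 ≤ k}
  have : {X | universalSigma2 X p = a} =
      ({X | (strip X).get? p = none} ∩ {_X | none = a}) ∪
        ⋃ m, {X | (strip X).get? p = some m} ∩
          ((E m.unpair.1 ∩ {_X | none = a}) ∪ ((E m.unpair.1)ᶜ ∩ {_X | written m = a})) := by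
    ext X
    simp only [universalSigma2, survivors, Set.mem_ofPred_eq, Set.mem_union, Set.mem_inter_iff,
      Set.mem_iUnion, Set.mem_compl_iff]
    rcases (strip X).get? p with _ | m
    · simp
    · simp only [reduceCtorEq, false_and, Option.some.injEq, exists_eq_left', false_or]
      have hE : X ∈ E m.unpair.1 ↔
          ∃ q > p, ∃ m', (strip X).get? q = some m' ∧ m'.unpair.1 ≤ m.unpair.1 := Iff.rfl
      rw [hE]
      split_ifs with h <;> simp [h]
  rw [this]
  refine ((isClosed_setOf_strip_get?_eq_none p).inter isClosed_const).sigmaZero_two.two_union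
    (sigmaZero_two_iUnion fun m => ?_)
  refine (isOpen_setOf_strip_get?_eq_some p m).sigmaZero_two.two_inter
    ((((isOpen_setOf_erased p _).inter isOpen_const).sigmaZero_two).two_union ?_)
  exact ((isOpen_setOf_erased p _).isClosed_compl.inter isClosed_const).sigmaZero_two

theorem sigmaMeasurableH_universalSigma2 : SigmaMeasurableH 2 universalSigma2 :=
  sigmaMeasurableH_two_of_forall sigmaZero_two_setOf_universalSigma2_eq

theorem survivors_ofList_append_zero (l : List ℕ) (s : Stream'.Seq ℕ) :
    survivors ((Stream'.Seq.ofList (l ++ [0])).append s) =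
      appendStrH (List.replicate (l.length + 1) none) (survivors s) := by
  set t := (Stream'.Seq.ofList (l ++ [0])).append s
  have ht : ∀ q, t.get? q =
      if q < l.length + 1 then (l ++ [0])[q]? else s.get? (q - (l.length + 1)) := fun q => by
    rw [Stream'.Seq.get?_ofList_append, List.length_append, List.length_singleton]
  funext p
  simp only [appendStrH, List.length_replicate]
  split_ifs with hp
  · rw [List.getElem_replicate]
    unfold survivors
    rcases hget : t.get? p with _ | m
    · rfl
    dsimp only
    split_ifs with herased
    · rfl
    -- the final move `0 = Nat.pair 0 0` erases everything and writes nothing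
    have hpl : p = l.length := by
      by_contra hne
      exact herased ⟨l.length, by omega, 0, by rw [ht]; simp, by simp⟩
    rw [ht, if_pos hp, hpl] at hget
    simp only [List.getElem?_concat_length, Option.some.injEq] at hget
    simp [← hget, written]
  · have hshift : ∀ q, l.length + 1 ≤ q → t.get? q = s.get? (q - (l.length + 1)) :=
      fun q hq => by rw [ht, if_neg (by omega)]
    unfold survivors
    rw [hshift p (by omega)]
    rcases s.get? (p - (l.length + 1)) with _ | m
    · rfl
    have herased : (∃ q > p, ∃ m', t.get? q = some m' ∧ m'.unpair.1 ≤ m.unpair.1) ↔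
        ∃ q > p - (l.length + 1), ∃ m', s.get? q = some m' ∧ m'.unpair.1 ≤ m.unpair.1 := by
      constructor
      · rintro ⟨q, hq, m', hm', hk⟩
        exact ⟨q - (l.length + 1), by omega, m', by rwa [hshift q (by omega)] at hm', hk⟩
      · rintro ⟨q, hq, m', hm', hk⟩
        refine ⟨q + (l.length + 1), by omega, m', ?_, hk⟩
        rwa [hshift _ (by omega), Nat.add_sub_cancel]
    simp only [herased]

theorem initializableH_universalSigma2 : InitializableH universalSigma2 := fun τ =>
  ⟨appendStrH (τ ++ [some 0]), continuous_appendStrH _, appendStrH_mem_cylH _ _, fun X => by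
    have : (τ ++ [some 0]).filterMap id = τ.filterMap id ++ [0] := by simp
    rw [Function.comp_apply, universalSigma2, universalSigma2, strip_appendStrH, this,
      survivors_ofList_append_zero, strip_appendStrH_replicate_none]⟩

theorem survivors_strip_pair (ℓ d : ℕ → ℕ) (n : ℕ) :
    survivors (strip fun n => some (Nat.pair (ℓ n) (d n + 1))) n =
      if ∀ n' > n, ℓ n < ℓ n' then some (d n) else none := by
  simp only [survivors, strip_get?_some, Option.some.injEq, exists_eq_left', Nat.unpair_pair,
    written]
  by_cases h : ∀ n' > n, ℓ n < ℓ n'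
  · rw [if_pos h, if_neg fun ⟨q, hq, hle⟩ => (h q hq).not_ge hle]
  · obtain ⟨q, hq, hle⟩ : ∃ q > n, ℓ q ≤ ℓ n := by simpa using h
    rw [if_neg h, if_pos ⟨q, hq, hle⟩]

end Universal

theorem exists_upcrossing {g : ℕ → ℕ} (hg : ∀ k, g (k + 1) ≤ g k + 1) {c : ℕ} (h0 : g 0 ≤ c)
    (hc : ∃ k, c < g k) : ∃ k, g k = c ∧ g (k + 1) = c + 1 := by
  classical
  obtain ⟨k, hk⟩ : ∃ k, Nat.find hc = k + 1 :=
    Nat.exists_eq_succ_of_ne_zero fun h => by have := Nat.find_spec hc; rw [h] at this; omega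
  have hlt := Nat.find_spec hc
  rw [hk] at hlt
  have hle : ¬c < g k := Nat.find_min hc (by omega)
  have := hg k
  exact ⟨k, by omega, by omega⟩

theorem _root_.List.getD_take_of_lt {α : Type*} {l : List α} {d : α} {j k : ℕ} (h : j < k) :
    (l.take k).getD j d = l.getD j d := by
  grind

theorem _root_.List.take_succ_eq_append_getD {α : Type*} {l : List α} {d : α} {j : ℕ}
    (h : j < l.length) : l.take (j + 1) = l.take j ++ [l.getD j d] := by
  rw [List.take_add_one, List.getElem?_eq_getElem h, List.getD_eq_getElem _ _ h]
  rfl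

/-! ### The finite-injury stack

The stack holds candidates `s[0], s[1], …`; `R n σ c` says that at stage `n` the candidate `c`
sitting on top of `σ` is refuted. At each stage the lowest refuted candidate is replaced by the
next one and everything above it is discarded; if nothing is refuted, a new candidate is pushed. -/

section Stack

variable (R : ℕ → List ℕ → ℕ → Prop)

def firstRefuted (n : ℕ) (s : List ℕ) : ℕ :=
  Nat.find (⟨s.length, .inl le_rfl⟩ : ∃ j, s.length ≤ j ∨ R n (s.take j) (s.getD j 0))

def stack : ℕ → List ℕ
  | 0 => []
  | n + 1 =>
    (stack n).take (firstRefuted R n (stack n)) ++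
      [(stack n).getD (firstRefuted R n (stack n)) 0 + 1]

def level (n : ℕ) : ℕ := firstRefuted R n (stack R n)

variable {R}

theorem firstRefuted_le_length (n : ℕ) (s : List ℕ) : firstRefuted R n s ≤ s.length :=
  Nat.find_min' _ (.inl le_rfl)

theorem not_refuted_of_lt_firstRefuted {n j : ℕ} {s : List ℕ} (h : j < firstRefuted R n s) :
    ¬R n (s.take j) (s.getD j 0) :=
  fun hR => Nat.find_min _ h (.inr hR)

theorem refuted_firstRefuted {n : ℕ} {s : List ℕ} (h : firstRefuted R n s < s.length) :
    R n (s.take (firstRefuted R n s)) (s.getD (firstRefuted R n s) 0) :=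
  (Nat.find_spec (⟨s.length, .inl le_rfl⟩ :
    ∃ j, s.length ≤ j ∨ R n (s.take j) (s.getD j 0))).resolve_left (not_le.mpr h)

theorem firstRefuted_le_of_refuted {n j : ℕ} {s : List ℕ} (h : R n (s.take j) (s.getD j 0)) :
    firstRefuted R n s ≤ j :=
  Nat.find_min' _ (.inr h)

theorem level_le_length (n : ℕ) : level R n ≤ (stack R n).length :=
  firstRefuted_le_length n _

theorem length_stack_succ (n : ℕ) : (stack R (n + 1)).length = level R n + 1 := by
  simp [stack, level, firstRefuted_le_length]

theorem take_stack_succ {n j : ℕ} (hj : j ≤ level R n) :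
    (stack R (n + 1)).take j = (stack R n).take j := by
  have hle := level_le_length (R := R) n
  change ((stack R n).take (level R n) ++ _).take j = _
  rw [List.take_append_of_le_length (by simp only [List.length_take]; omega), List.take_take,
    min_eq_left hj]

theorem getD_stack_succ_level (n : ℕ) :
    (stack R (n + 1)).getD (level R n) 0 = (stack R n).getD (level R n) 0 + 1 := by
  have hlen : ((stack R n).take (level R n)).length = level R n := by
    simp [level_le_length]
  change ((stack R n).take (level R n) ++ _).getD _ 0 = _
  rw [List.getD_append_right _ _ _ _ hlen.le, hlen, Nat.sub_self]
  rfl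

theorem getD_stack_succ_of_lt {n j : ℕ} (hj : j < level R n) :
    (stack R (n + 1)).getD j 0 = (stack R n).getD j 0 := by
  rw [← List.getD_take_of_lt (Nat.lt_succ_self j), take_stack_succ hj, List.getD_take_of_lt
    (Nat.lt_succ_self j)]

theorem take_stack_of_forall_le {a b j : ℕ} (hab : a ≤ b)
    (h : ∀ m, a ≤ m → m < b → j ≤ level R m) : (stack R b).take j = (stack R a).take j := by
  induction b, hab using Nat.le_induction with
  | base => rfl
  | succ b hab ih =>
    rw [take_stack_succ (h b hab (Nat.lt_succ_self b)), ih fun m hm hmb => h m hm (by omega)]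

theorem stack_congr {R' : ℕ → List ℕ → ℕ → Prop} {n : ℕ} (h : ∀ m < n, R m = R' m) :
    stack R n = stack R' n := by
  induction n with
  | zero => rfl
  | succ n ih =>
    rw [stack, stack, ih fun m hm => h m (by omega)]
    simp only [firstRefuted, h n (Nat.lt_succ_self n)]

theorem level_congr {R' : ℕ → List ℕ → ℕ → Prop} {n : ℕ} (h : ∀ m < n + 1, R m = R' m) :
    level R n = level R' n := by
  rw [level, level, stack_congr fun m hm => h m (by omega)]
  simp only [firstRefuted, h n (Nat.lt_succ_self n)]

end Stack

section Position

variable {R : ℕ → List ℕ → ℕ → Prop} {N j : ℕ}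

theorem take_stack_eq_of_le_level (hN : ∀ n ≥ N, j ≤ level R n) {n : ℕ} (hn : N ≤ n) :
    (stack R n).take j = (stack R N).take j :=
  take_stack_of_forall_le hn fun m hm _ => hN m hm

theorem lt_length_stack (hN : ∀ n ≥ N, j ≤ level R n) {n : ℕ} (hn : N < n) :
    j < (stack R n).length := by
  obtain ⟨m, rfl⟩ : ∃ m, n = m + 1 := ⟨n - 1, by omega⟩
  have := hN m (by omega)
  rw [length_stack_succ]
  omega

theorem refuted_of_level_eq (hN : ∀ n ≥ N, j ≤ level R n) {n : ℕ} (hn : N < n)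
    (hl : level R n = j) : R n ((stack R N).take j) ((stack R n).getD j 0) := by
  have := refuted_firstRefuted (R := R) (n := n) (s := stack R n)
    (by rw [← level, hl]; exact lt_length_stack hN hn)
  rwa [← level, hl, take_stack_eq_of_le_level hN hn.le] at this

theorem level_eq_of_refuted (hN : ∀ n ≥ N, j ≤ level R n) {n : ℕ} (hn : N ≤ n)
    (h : R n ((stack R N).take j) ((stack R n).getD j 0)) : level R n = j :=
  le_antisymm (firstRefuted_le_of_refuted (by rwa [take_stack_eq_of_le_level hN hn])) (hN n hn)

theorem getD_stack_eq_of_level_ne (hN : ∀ n ≥ N, j ≤ level R n) {n₀ : ℕ} (hn₀ : N ≤ n₀)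
    (hne : ∀ n ≥ n₀, level R n ≠ j) {n : ℕ} (hn : n₀ ≤ n) :
    (stack R n).getD j 0 = (stack R n₀).getD j 0 := by
  induction n, hn using Nat.le_induction with
  | base => rfl
  | succ n hn ih =>
    rw [getD_stack_succ_of_lt (lt_of_le_of_ne (hN n (by omega)) (hne n hn).symm), ih]

theorem exists_refuted_of_frequently_level_eq (hN : ∀ n ≥ N, j ≤ level R n)
    (hfreq : ∀ n₀, ∃ n ≥ n₀, level R n = j) {c : ℕ} (hc : (stack R (N + 1)).getD j 0 ≤ c) :
    ∃ n, R n ((stack R N).take j) c := by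
  set g := fun k => (stack R (N + 1 + k)).getD j 0
  have hstep : ∀ k, g (k + 1) = g k + if level R (N + 1 + k) = j then 1 else 0 := by
    intro k
    change (stack R (N + 1 + k + 1)).getD j 0 = (stack R (N + 1 + k)).getD j 0 + _
    split_ifs with hl
    · rw [← hl]
      exact getD_stack_succ_level _
    · exact getD_stack_succ_of_lt (lt_of_le_of_ne (hN _ (by omega)) (Ne.symm hl))
  have hmono : Monotone g := monotone_nat_of_le_succ fun k => by rw [hstep]; omega
  have hunbounded : ∀ b, ∃ k, b ≤ g k := by
    intro b
    induction b with
    | zero => exact ⟨0, Nat.zero_le _⟩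
    | succ b ih =>
      obtain ⟨k, hk⟩ := ih
      obtain ⟨n, hn, hl⟩ := hfreq (N + 1 + k)
      refine ⟨n - (N + 1) + 1, ?_⟩
      have := hmono (show k ≤ n - (N + 1) by omega)
      rw [hstep, show N + 1 + (n - (N + 1)) = n by omega, if_pos hl]
      omega
  obtain ⟨k, hk, hk1⟩ := exists_upcrossing (g := g) (fun k => by rw [hstep]; split_ifs <;> omega)
    hc (hunbounded (c + 1))
  have hl : level R (N + 1 + k) = j := by
    by_contra hl
    rw [hstep, if_neg hl] at hk1
    omega
  have := refuted_of_level_eq hN (n := N + 1 + k) (by omega) hl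
  rw [show (stack R (N + 1 + k)).getD j 0 = c from hk] at this
  exact ⟨_, this⟩

end Position

section Guessing

def digits (s : List ℕ) : List ℕ := s.map fun c => c.unpair.1

variable (C : List ℕ → ℕ → Set HatBaire)

/-- The candidate `c` on top of `σ` guesses that `digits (σ ++ [c])` is a prefix of the output,
with `C _ c.unpair.2` as the closed set witnessing it. -/
def guessSet (σ : List ℕ) (c : ℕ) : Set HatBaire := C (digits (σ ++ [c])) c.unpair.2

def Refuted (X : HatBaire) (n : ℕ) (σ : List ℕ) (c : ℕ) : Prop :=
  Disjoint (guessSet C σ c) (PiNat.cylinder X n)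

def strategy (X : HatBaire) : HatBaire := fun n =>
  some (Nat.pair (level (Refuted C X) n)
    (((stack (Refuted C X) (n + 1)).getD (level (Refuted C X) n) 0).unpair.1 + 1))

theorem refuted_congr {X Y : HatBaire} {n m : ℕ} (hY : Y ∈ PiNat.cylinder X n) (hm : m ≤ n) :
    Refuted C Y m = Refuted C X m := by
  have : PiNat.cylinder Y m = PiNat.cylinder X m :=
    PiNat.mem_cylinder_iff_eq.mp (PiNat.cylinder_anti X hm hY)
  funext σ c
  rw [Refuted, Refuted, this]

theorem continuous_strategy : Continuous (strategy C) :=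
  continuous_pi fun n => (isLocallyConstant_of_eq_on_cylinder (n + 1) fun X Y hY => by
    have h : ∀ m < n + 1, Refuted C Y m = Refuted C X m :=
      fun m hm => refuted_congr C hY (by omega)
    simp only [strategy, stack_congr h, level_congr h]).continuous

theorem universalSigma2_strategy (X : HatBaire) (n : ℕ) :
    universalSigma2 (strategy C X) n =
      if ∀ n' > n, level (Refuted C X) n < level (Refuted C X) n' then
        some ((stack (Refuted C X) (n + 1)).getD (level (Refuted C X) n) 0).unpair.1
      else none :=
  survivors_strip_pair _ _ n

variable {C}

theorem not_mem_guessSet_of_refuted {X : HatBaire} {n : ℕ} {σ : List ℕ} {c : ℕ}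
    (h : Refuted C X n σ c) : X ∉ guessSet C σ c :=
  fun hX => Set.disjoint_left.mp h hX (PiNat.self_mem_cylinder X n)

theorem mem_guessSet_of_not_refuted {X : HatBaire} {σ : List ℕ} {c n₀ : ℕ}
    (hcl : IsClosed (guessSet C σ c)) (h : ∀ n ≥ n₀, ¬Refuted C X n σ c) : X ∈ guessSet C σ c := by
  by_contra hX
  obtain ⟨n, hn⟩ := PiNat.exists_disjoint_cylinder hcl hX
  exact h (max n n₀) (le_max_right _ _) (hn.mono_right (PiNat.cylinder_anti X (le_max_left _ _)))

end Guessing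

section Prefix

theorem SeqPrefix.get?_eq {l : List ℕ} {s : Stream'.Seq ℕ} (h : SeqPrefix (ofList l) s) {i : ℕ}
    (hi : i < l.length) : s.get? i = some l[i] :=
  h i _ (by simp [ofList, Stream'.Seq.ofList_get?, hi])

theorem SeqPrefix.append_singleton {l : List ℕ} {s : Stream'.Seq ℕ} {v : ℕ}
    (h : SeqPrefix (ofList l) s) (hv : s.get? l.length = some v) :
    SeqPrefix (ofList (l ++ [v])) s := by
  intro n a ha
  simp only [ofList, Stream'.Seq.ofList_get?] at ha
  rcases lt_trichotomy n l.length with hn | rfl | hn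
  · rw [List.getElem?_append_left hn] at ha
    exact h n a (by simpa [ofList, Stream'.Seq.ofList_get?] using ha)
  · rw [List.getElem?_concat_length, Option.some_inj] at ha
    exact ha ▸ hv
  · have : (l ++ [v]).length ≤ n := by
      simp only [List.length_append, List.length_singleton]; omega
    simp [List.getElem?_eq_none this] at ha

theorem isOpen_setOf_seqPrefix (σ : List ℕ) :
    IsOpen {Z : HatBaire | SeqPrefix (ofList σ) (strip Z)} := by
  have : {Z : HatBaire | SeqPrefix (ofList σ) (strip Z)} =
      ⋂ i : Fin σ.length, {Z | (strip Z).get? i = some σ[i]} := by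
    ext Z
    simp only [SeqPrefix, ofList, Stream'.Seq.ofList_get?, Set.mem_ofPred_eq, Set.mem_iInter,
      List.getElem?_eq_some_iff]
    exact ⟨fun h i => h i _ ⟨i.isLt, rfl⟩, fun h n a ⟨hn, ha⟩ => ha ▸ h ⟨n, hn⟩⟩
  rw [this]
  exact isOpen_iInter_of_finite fun i => isOpen_setOf_strip_get?_eq_some _ _

structure PrefixApprox (G : HatBaire → HatBaire) (C : List ℕ → ℕ → Set HatBaire) : Prop where
  isClosed : ∀ σ m, IsClosed (C σ m)
  monotone : ∀ σ, Monotone (C σ)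
  exists_mem_iff : ∀ σ X, (∃ m, X ∈ C σ m) ↔ SeqPrefix (ofList σ) (strip (G X))

theorem exists_prefixApprox {G : HatBaire → HatBaire} (hG : SigmaMeasurableH 2 G) :
    ∃ C, PrefixApprox G C := by
  choose C hcl hmono hC using fun σ =>
    (hG.sigmaZero_two_preimage (isOpen_setOf_seqPrefix σ)).exists_monotone_isClosed
  refine ⟨C, hcl, hmono, fun σ X => ?_⟩
  simpa using (Set.ext_iff.mp (hC σ) X).symm

end Prefix

section Correctness

variable {G : HatBaire → HatBaire} {C : List ℕ → ℕ → Set HatBaire} {X : HatBaire}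

theorem digits_append_singleton (σ : List ℕ) (c : ℕ) :
    digits (σ ++ [c]) = digits σ ++ [c.unpair.1] := by
  simp [digits]

theorem length_digits_take {s : List ℕ} {j : ℕ} (h : j ≤ s.length) :
    (digits (s.take j)).length = j := by
  simp [digits, h]

theorem exists_forall_succ_le_level (hC : PrefixApprox G C) {N j n₀ : ℕ}
    (hN : ∀ n ≥ N, j ≤ level (Refuted C X) n) (hne : ∀ n ≥ n₀, level (Refuted C X) n ≠ j) :
    ∃ N', (∀ n ≥ N', j + 1 ≤ level (Refuted C X) n) ∧
      SeqPrefix (ofList (digits ((stack (Refuted C X) N').take (j + 1)))) (strip (G X)) := by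
  set n₂ := max n₀ (N + 1)
  have hnot : ∀ n ≥ n₂,
      ¬Refuted C X n ((stack (Refuted C X) N).take j) ((stack (Refuted C X) n₂).getD j 0) := by
    intro n hn hR
    rw [← getD_stack_eq_of_level_ne hN (by omega) (fun n hn => hne n (by omega)) hn] at hR
    exact hne n (by omega) (level_eq_of_refuted hN (by omega) hR)
  have htake : (stack (Refuted C X) n₂).take (j + 1) =
      (stack (Refuted C X) N).take j ++ [(stack (Refuted C X) n₂).getD j 0] := by
    rw [List.take_succ_eq_append_getD (lt_length_stack hN (by omega)),
      take_stack_eq_of_le_level hN (by omega)]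
  refine ⟨n₂, fun n hn => lt_of_le_of_ne (hN n (by omega)) (hne n (by omega)).symm, ?_⟩
  rw [htake]
  exact (hC.exists_mem_iff _ X).mp ⟨_, mem_guessSet_of_not_refuted (hC.isClosed _ _) hnot⟩

theorem exists_forall_level_ne (hC : PrefixApprox G C) {N j v : ℕ}
    (hN : ∀ n ≥ N, j ≤ level (Refuted C X) n)
    (hpre : SeqPrefix (ofList (digits ((stack (Refuted C X) N).take j))) (strip (G X)))
    (hv : (strip (G X)).get? j = some v) : ∃ n₀, ∀ n ≥ n₀, level (Refuted C X) n ≠ j := by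
  by_contra! hfreq
  set σ := (stack (Refuted C X) N).take j
  have hlen : (digits σ).length = j :=
    length_digits_take ((hN N le_rfl).trans (level_le_length N))
  obtain ⟨m₀, hm₀⟩ := (hC.exists_mem_iff _ X).mpr (hpre.append_singleton (hlen ▸ hv))
  set c₀ := (stack (Refuted C X) (N + 1)).getD j 0
  -- otherwise the candidate guessing `v` with an index `≥ m₀` would eventually be refuted
  obtain ⟨n, hn⟩ := exists_refuted_of_frequently_level_eq hN hfreq
    (c := Nat.pair v (max m₀ c₀)) ((le_max_right _ _).trans (Nat.right_le_pair _ _))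
  refine not_mem_guessSet_of_refuted hn ?_
  rw [guessSet, digits_append_singleton, Nat.unpair_pair]
  exact hC.monotone _ (le_max_left _ _) hm₀

theorem exists_forall_le_level (hC : PrefixApprox G C) (X : HatBaire) :
    ∀ j, (∀ k < j, ((strip (G X)).get? k).isSome) →
      ∃ N, (∀ n ≥ N, j ≤ level (Refuted C X) n) ∧
        SeqPrefix (ofList (digits ((stack (Refuted C X) N).take j))) (strip (G X))
  | 0, _ => ⟨0, fun n _ => Nat.zero_le _, fun n a h => by simp [ofList, digits] at h⟩
  | j + 1, hj => by
    obtain ⟨N, hN, hpre⟩ := exists_forall_le_level hC X j fun k hk => hj k (by omega)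
    obtain ⟨v, hv⟩ := Option.isSome_iff_exists.mp (hj j (Nat.lt_succ_self j))
    obtain ⟨n₀, hne⟩ := exists_forall_level_ne hC hN hpre hv
    exact exists_forall_succ_le_level hC hN hne

theorem frequently_level_eq_of_get?_eq_none (hC : PrefixApprox G C) {j : ℕ}
    (hj : ∀ k < j, ((strip (G X)).get? k).isSome) (hnone : (strip (G X)).get? j = none) :
    ∀ n₀, ∃ n ≥ n₀, level (Refuted C X) n = j := by
  obtain ⟨N, hN, -⟩ := exists_forall_le_level hC X j hj
  by_contra! ⟨n₀, hne⟩
  obtain ⟨N', hN', hpre⟩ := exists_forall_succ_le_level hC hN hne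
  have hlen := length_digits_take ((hN' N' le_rfl).trans (level_le_length N'))
  simpa [hnone] using hpre.get?_eq (i := j) (by omega)

theorem isSome_of_le_level (hC : PrefixApprox G C) {n : ℕ}
    (hs : ∀ n' > n, level (Refuted C X) n < level (Refuted C X) n') :
    ∀ k ≤ level (Refuted C X) n, ((strip (G X)).get? k).isSome := by
  classical
  by_contra! ⟨k, hk, hnone⟩
  have hex : ∃ k, (strip (G X)).get? k = none := ⟨k, by simpa using hnone⟩
  obtain ⟨n', hn', hl⟩ := frequently_level_eq_of_get?_eq_none hC
    (fun k hk => Option.isSome_iff_ne_none.mpr (Nat.find_min hex hk)) (Nat.find_spec hex) (n + 1)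
  have := Nat.find_min' hex (by simpa using hnone)
  have := hs n' (by omega)
  omega

theorem exists_survivor (hC : PrefixApprox G C) {j : ℕ}
    (hj : ∀ k ≤ j, ((strip (G X)).get? k).isSome) :
    ∃ n, level (Refuted C X) n = j ∧ (∀ n' > n, j < level (Refuted C X) n') ∧
      (strip (G X)).get? j = some ((stack (Refuted C X) (n + 1)).getD j 0).unpair.1 := by
  classical
  obtain ⟨N, hN, hpre⟩ := exists_forall_le_level hC X (j + 1) fun k hk => hj k (by omega)
  have hex : ∃ ν, ∀ n > ν, j < level (Refuted C X) n := ⟨N, fun n hn => hN n hn.le⟩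
  set ν := Nat.find hex
  have hν : ∀ n > ν, j < level (Refuted C X) n := Nat.find_spec hex
  have hle : level (Refuted C X) ν ≤ j := by
    rcases Nat.eq_zero_or_pos ν with h0 | hpos
    · have := level_le_length (R := Refuted C X) 0
      rw [h0]
      simp only [stack, List.length_nil, Nat.le_zero] at this
      omega
    obtain ⟨n, hn, hln⟩ : ∃ n > ν - 1, level (Refuted C X) n ≤ j := by
      simpa using Nat.find_min hex (show ν - 1 < ν by omega)
    obtain rfl : n = ν := le_antisymm (not_lt.mp fun h => (hν n h).not_ge hln) (by omega)
    exact hln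
  have hge : j ≤ level (Refuted C X) ν := by
    have := hν (ν + 1) (Nat.lt_succ_self ν)
    have := level_le_length (R := Refuted C X) (ν + 1)
    rw [length_stack_succ] at this
    omega
  refine ⟨ν, le_antisymm hle hge, hν, ?_⟩
  have hlen : j < (stack (Refuted C X) N).length := (hN N le_rfl).trans (level_le_length N)
  have htake :
      (stack (Refuted C X) (ν + 1)).take (j + 1) = (stack (Refuted C X) N).take (j + 1) := by
    rw [← take_stack_of_forall_le (le_max_left (ν + 1) N) fun m hm _ => hν m (by omega),
      take_stack_eq_of_le_level hN (le_max_right _ _)]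
  rw [hpre.get?_eq (i := j) (by rw [length_digits_take (by omega)]; omega),
    ← List.getD_take_of_lt (Nat.lt_succ_self j), htake]
  simp [digits, List.getElem?_eq_getElem hlen]

theorem strip_universalSigma2_strategy (hC : PrefixApprox G C) (X : HatBaire) :
    strip (universalSigma2 (strategy C X)) = strip (G X) := by
  set D := fun k => ∀ i ≤ k, ((strip (G X)).get? i).isSome
  have hD : Antitone D := fun k k' hkk' hk' i hi => hk' i (hi.trans hkk')
  choose! ν hlevel hsurv hdigit using fun k (hk : D k) => exists_survivor hC hk
  have hmono : StrictMonoOn ν {k | D k} := by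
    intro k hk k' hk' hkk'
    rcases lt_trichotomy (ν k) (ν k') with h | h | h
    · exact h
    · have := hlevel k hk; rw [h, hlevel k' hk'] at this; omega
    · have := hsurv k' hk' (ν k) h; rw [hlevel k hk] at this; omega
  have hY : ∀ i, (universalSigma2 (strategy C X) i).isSome ↔ ∃ k, D k ∧ ν k = i := by
    intro i
    rw [universalSigma2_strategy]
    constructor
    · intro hi
      have hs : ∀ n' > i, level (Refuted C X) i < level (Refuted C X) n' := by
        by_contra h; rw [if_neg h] at hi; exact Bool.false_ne_true hi
      have hDk : D (level (Refuted C X) i) := isSome_of_le_level hC hs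
      refine ⟨_, hDk, ?_⟩
      rcases lt_trichotomy (ν (level (Refuted C X) i)) i with h | h | h
      · have := hsurv _ hDk i h; omega
      · exact h
      · have := hs _ h; rw [hlevel _ hDk] at this; omega
    · rintro ⟨k, hk, rfl⟩
      rw [if_pos ((hlevel k hk).symm ▸ hsurv k hk)]
      rfl
  refine Stream'.Seq.ext fun k => ?_
  rw [strip_get?_of_enum hD hmono hY k]
  split_ifs with hk
  · rw [universalSigma2_strategy, if_pos ((hlevel k hk).symm ▸ hsurv k hk), hdigit k hk,
      hlevel k hk]
  · obtain ⟨i, hi, hnone⟩ : ∃ i ≤ k, (strip (G X)).get? i = none := by simpa [D] using hk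
    exact (Stream'.Seq.le_stable _ hi hnone).symm

end Correctness

/-- There is a conciliatory function `U : ω̂^ω → ω̂^ω` that is simultaneously
`Σ⁰₂`-universal and initializable. -/
theorem exists_sigma2_universal_initializable :
    ∃ U : HatBaire → HatBaire, ConciliatoryF U ∧ SigmaUniversal 2 U ∧ InitializableH U := by
  refine ⟨universalSigma2, conciliatoryF_universalSigma2,
    ⟨sigmaMeasurableH_universalSigma2, fun G _ hG => ?_⟩, initializableH_universalSigma2⟩
  obtain ⟨C, hC⟩ := exists_prefixApprox hG
  exact ⟨strategy C, continuous_strategy C, fun X => (strip_universalSigma2_strategy hC X).symm⟩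

end WadgeStudy
end
end

section
/- Let Q be a quasi-order and A: ω^ω → Q. If F(A) is nonempty, then the restriction A↾F(A) is initializable, i.e., for every σ ∈ ω^{<ω} extendible in F(A) there is a continuous θ: F(A) → F(A) ∩ [σ] with A(X) ≤_Q A(θ(X)) for all X ∈ F(A). Furthermore, if A is Q-Wadge equivalent to an initializable function (one satisfying B ≤_w B↾[σ] for every σ ∈ ω^{<ω}), then A ≡_w A↾F(A). -/
/-!
Common definitions for formalizing "On the structure of the Wadge degrees of bqo-valued
Borel functions" by Kihara and Montalbán.
-/

open scoped Classical
noncomputable section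

namespace WadgeStudy

/-!
Both parts rest on one observation. If `f` is continuous and `A X ≤ C (f X)` for all `X`, then
continuity maps a cylinder around `X` into any prescribed cylinder around `f X`, so `A↾[X↾n]`
reduces to `C↾[f X↾m]` for suitable `n`. Hence `f X ∈ F(C)` as soon as `C ≤_w A↾[X↾n]` for
all `n`, which holds when `X ∈ F(A)` and `A = C`, or when `A` is initializable and `C ≤_w A`.
So `X ↦ σ⌢g(X)`, for a reduction `g` of `A` to `A↾[σ]`, maps `F(A)` into `F(A) ∩ [σ]`, and any
reduction of an initializable `B ≡_w A` to `A` takes values in `F(A)`.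
-/

theorem WadgeLE.trans {X Y Z : Type*} [TopologicalSpace X] [TopologicalSpace Y]
    [TopologicalSpace Z] {Q : Type*} [Preorder Q] {A : X → Q} {B : Y → Q} {C : Z → Q}
    (hAB : WadgeLE A B) (hBC : WadgeLE B C) : WadgeLE A C := by
  obtain ⟨θ, hθ, hθle⟩ := hAB
  obtain ⟨η, hη, hηle⟩ := hBC
  exact ⟨η ∘ θ, hη.comp hθ, fun x => (hθle x).trans (hηle (θ x))⟩

theorem continuous_appendStr (σ : List ℕ) : Continuous (appendStr σ) := by
  refine continuous_pi fun i => ?_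
  by_cases h : i < σ.length
  · simp only [appendStr, dif_pos h]
    exact continuous_const
  · simp only [appendStr, dif_neg h]
    exact continuous_apply _

theorem appendStr_mem_cylB (σ : List ℕ) (Z : Baire) : appendStr σ Z ∈ cylB σ := fun i => by
  simp [appendStr]

theorem appendStr_drop_of_mem_cylB {σ : List ℕ} {Y : Baire} (hY : Y ∈ cylB σ) :
    appendStr σ (fun j => Y (j + σ.length)) = Y := by
  funext i
  by_cases h : i < σ.length
  · simp only [appendStr, dif_pos h]
    exact (hY ⟨i, h⟩).symm
  · simp only [appendStr, dif_neg h]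
    congr 1
    omega

theorem cylB_initSeg (X : Baire) (n : ℕ) : cylB (initSeg X n) = PiNat.cylinder X n := by
  have hlen : (initSeg X n).length = n := List.length_ofFn
  ext Y
  refine ⟨fun h i hi => by simpa [initSeg] using h ⟨i, hi.trans_eq hlen.symm⟩,
    fun h i => (h i (i.isLt.trans_eq hlen)).trans (List.get_ofFn (fun j : Fin n => X j) i).symm⟩

theorem initSeg_eq_of_mem_cylB {X : Baire} {σ : List ℕ} (h : X ∈ cylB σ) :
    initSeg X σ.length = σ :=
  List.ext_get (List.length_ofFn) fun n _ h₂ => by simpa [initSeg] using h ⟨n, h₂⟩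

theorem _root_.Continuous.exists_mapsTo_cylinder {E F : ℕ → Type*}
    [∀ n, TopologicalSpace (E n)] [∀ n, DiscreteTopology (E n)]
    [∀ n, TopologicalSpace (F n)] [∀ n, DiscreteTopology (F n)]
    {f : (∀ n, E n) → ∀ n, F n} (hf : Continuous f) (X : ∀ n, E n) (m : ℕ) :
    ∃ n, Set.MapsTo f (PiNat.cylinder X n) (PiNat.cylinder (f X) m) := by
  obtain ⟨-, ⟨Y, n, rfl⟩, hXY, hsub⟩ :=
    (PiNat.isTopologicalBasis_cylinders E).exists_subset_of_mem_open
      (show X ∈ f ⁻¹' PiNat.cylinder (f X) m from PiNat.self_mem_cylinder _ _)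
      ((PiNat.isOpen_cylinder F _ m).preimage hf)
  rw [← PiNat.mem_cylinder_iff_eq.1 hXY] at hsub
  exact ⟨n, hsub⟩

section Wadge

variable {Q : Type*} [Preorder Q]

theorem restrictCyl_wadgeLE (A : Baire → Q) (σ : List ℕ) : WadgeLE (restrictCyl A σ) A :=
  ⟨appendStr σ, continuous_appendStr σ, fun _ => le_rfl⟩

theorem restrictCyl_wadgeLE_of_mapsTo {A C : Baire → Q} {f : Baire → Baire} (hf : Continuous f)
    (hle : ∀ X, A X ≤ C (f X)) {τ ρ : List ℕ} (hmaps : Set.MapsTo f (cylB τ) (cylB ρ)) :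
    WadgeLE (restrictCyl A τ) (restrictCyl C ρ) := by
  refine ⟨fun W j => f (appendStr τ W) (j + ρ.length),
    continuous_pi fun j => (continuous_apply _).comp (hf.comp (continuous_appendStr τ)),
    fun W => ?_⟩
  have hρ := appendStr_drop_of_mem_cylB (hmaps (appendStr_mem_cylB τ W))
  simpa only [restrictCyl, hρ] using hle (appendStr τ W)

theorem mem_FSet_iff {A : Baire → Q} {X : Baire} :
    X ∈ FSet A ↔ ∀ n, WadgeLE A (restrictCyl A (initSeg X n)) :=
  ⟨fun h n => (h n).2, fun h n => ⟨restrictCyl_wadgeLE A _, h n⟩⟩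

theorem wadgeLE_restrictCyl_of_mem_FSet {A : Baire → Q} {X : Baire} (hX : X ∈ FSet A)
    {σ : List ℕ} (hσ : X ∈ cylB σ) : WadgeLE A (restrictCyl A σ) := by
  simpa only [initSeg_eq_of_mem_cylB hσ] using mem_FSet_iff.1 hX σ.length

theorem mem_FSet_of_le_comp {A C : Baire → Q} {f : Baire → Baire} (hf : Continuous f)
    (hle : ∀ X, A X ≤ C (f X)) {X : Baire} (hX : ∀ n, WadgeLE C (restrictCyl A (initSeg X n))) :
    f X ∈ FSet C := by
  refine mem_FSet_iff.2 fun m => ?_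
  obtain ⟨n, hn⟩ := hf.exists_mapsTo_cylinder X m
  rw [← cylB_initSeg, ← cylB_initSeg] at hn
  exact (hX n).trans (restrictCyl_wadgeLE_of_mapsTo hf hle hn)

end Wadge

/-- Let `Q` be a quasi-order and `A : ω^ω → Q`.  If `F(A)` is nonempty, then
`A↾F(A)` is initializable: for every `σ ∈ ω^{<ω}` extendible in `F(A)` there is a continuous
`θ : F(A) → F(A) ∩ [σ]` with `A(X) ≤_Q A(θ(X))` for all `X ∈ F(A)`.  Furthermore, if `A` is
`Q`-Wadge equivalent to an initializable function, then `A ≡_w A↾F(A)`. -/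
theorem fset_restriction_initializable (Q : Type u) [Preorder Q] (A : Baire → Q) :
    ((FSet A).Nonempty →
      ∀ σ : List ℕ, (∃ X ∈ FSet A, X ∈ cylB σ) →
        ∃ θ : ↥(FSet A) → ↥(FSet A), Continuous θ ∧ (∀ X, (θ X).1 ∈ cylB σ) ∧
          ∀ X : ↥(FSet A), A X.1 ≤ A (θ X).1) ∧
    ((∃ B : Baire → Q, Initializable B ∧ WadgeEquiv A B) →
      WadgeEquiv A fun X : ↥(FSet A) => A X.1) := by
  constructor
  · rintro - σ ⟨X₀, hX₀, hX₀σ⟩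
    obtain ⟨g, hg, hgle⟩ := wadgeLE_restrictCyl_of_mem_FSet hX₀ hX₀σ
    have hf : Continuous fun X => appendStr σ (g X) := (continuous_appendStr σ).comp hg
    refine ⟨fun X => ⟨_, mem_FSet_of_le_comp hf hgle (mem_FSet_iff.1 X.2)⟩,
      (hf.comp continuous_subtype_val).subtype_mk _, fun X => appendStr_mem_cylB σ _,
      fun X => hgle X.1⟩
  · rintro ⟨B, hB, ⟨g, hg, hgle⟩, ⟨h, hh, hhle⟩⟩
    have hmem (W : Baire) : h W ∈ FSet A :=
      mem_FSet_of_le_comp hh hhle fun _ => WadgeLE.trans ⟨g, hg, hgle⟩ (hB _)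
    exact ⟨⟨fun X => ⟨h (g X), hmem (g X)⟩, (hh.comp hg).subtype_mk _,
        fun X => (hgle X).trans (hhle (g X))⟩,
      ⟨Subtype.val, continuous_subtype_val, fun _ => le_rfl⟩⟩

end WadgeStudy
end
end
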